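/- There exists ε > 0 such that for all k ∈ ℝ^d with |k - e₁| ≤ ε, the function φ_k(x) = k₁x₁² + k'·x' on Ω̄ = closure of B₀(2R) ∩ {x₁ < -R/4} satisfies: inf_{Ω̄} |∇φ_k| ≥ α and the subellipticity condition (Hess φ_k(x))∇φ_k(x)·∇φ_k(x) + (Hess φ_k(x))ξ·ξ ≥ β|∇φ_k(x)|² for all x ∈ Ω̄ and ξ ⊥ ∇φ_k(x) with |ξ| = |∇φ_k(x)|, where α, β > 0 are independent of k. -/

import Mathlib

/-!
Write `φ_k = k₁ x₁² + ⟪k', x⟫` with `k' = k - k₁ e₁ ⊥ e₁`. Then `∇φ_k(x) = 2 k₁ x₁ e₁ + k'` and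
`Hess φ_k = 2 k₁ e₁ ⊗ e₁`. For `|k - e₁| ≤ min (1/2) (R/4)` we get `k₁ ≥ 1/2` and `|k'| ≤ R/4`,
while `x₁ ≤ -R/4` on `Ω̄`; so `a = 2 k₁ x₁` satisfies `|a| ≥ R/4 ≥ |k'|`. Hence
`|∇φ_k|² = a² + |k'|²` lies between `(R/4)²` and `2a²`, and
`Hess φ_k (∇φ_k, ∇φ_k) = 2 k₁ a² ≥ a² ≥ |∇φ_k|²/2`, the `ξ`-term being nonnegative.
-/

open EuclideanSpace

lemma apply_le_of_mem_closure_inter {ι : Type*} {s : Set (EuclideanSpace ℝ ι)} {i : ι} {t : ℝ}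
    {x : EuclideanSpace ℝ ι} (hx : x ∈ closure (s ∩ {y | y i < t})) : x i ≤ t :=
  closure_lt_subset_le (proj i).continuous continuous_const
    (closure_mono Set.inter_subset_right hx)

namespace QuadLinWeight

variable {ι : Type*} [Fintype ι]

noncomputable def weight (i : ι) (c : ℝ) (v : EuclideanSpace ℝ ι) (y : EuclideanSpace ℝ ι) : ℝ :=
  c * y i ^ 2 + inner ℝ v y

section Derivatives

variable (i : ι) (c : ℝ) (v : EuclideanSpace ℝ ι)

lemma hasFDerivAt_weight (x : EuclideanSpace ℝ ι) :
    HasFDerivAt (weight i c v)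
      (((2 * c) • proj i).smulRight (proj i : EuclideanSpace ℝ ι →L[ℝ] ℝ) x + innerSL ℝ v) x := by
  set π : EuclideanSpace ℝ ι →L[ℝ] ℝ := proj i
  have hsq : HasFDerivAt (fun y => π y * π y) (π x • π + π x • π) x :=
    π.hasFDerivAt.mul π.hasFDerivAt
  refine ((hsq.const_mul c).add (innerSL ℝ v).hasFDerivAt).congr_of_eventuallyEq
    (Filter.Eventually.of_forall fun y => by simp [weight, π, sq]) |>.congr_fderiv ?_
  ext u
  simp only [smul_add, add_apply, smul_apply, smul_eq_mul, coe_innerSL_apply,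
    ContinuousLinearMap.smulRight_apply, add_left_inj]
  ring

lemma iteratedFDeriv_two_weight (x u w : EuclideanSpace ℝ ι) :
    iteratedFDeriv ℝ 2 (weight i c v) x ![u, w] = 2 * c * u i * w i := by
  set π : EuclideanSpace ℝ ι →L[ℝ] ℝ := proj i
  set A := ((2 * c) • π).smulRight π
  have hfderiv : fderiv ℝ (weight i c v) = fun y => A y + innerSL ℝ v :=
    funext fun y => (hasFDerivAt_weight i c v y).fderiv
  rw [iteratedFDeriv_two_apply, hfderiv, (A.hasFDerivAt.add_const (innerSL ℝ v)).fderiv]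
  simp [A, π]

variable [DecidableEq ι]

lemma gradient_weight (x : EuclideanSpace ℝ ι) :
    gradient (weight i c v) x = single i (2 * c * x i) + v := by
  refine HasGradientAt.gradient ?_
  rw [hasGradientAt_iff_hasFDerivAt]
  refine (hasFDerivAt_weight i c v x).congr_fderiv ?_
  ext u
  simp [inner_single_left]

end Derivatives

variable [DecidableEq ι]

lemma norm_sq_single_add (i : ι) (a : ℝ) {w : EuclideanSpace ℝ ι} (hw : w i = 0) :
    ‖single i a + w‖ ^ 2 = a ^ 2 + ‖w‖ ^ 2 := by
  have horth : inner ℝ (single i a) w = 0 := by simp [inner_single_left, hw]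
  rw [norm_add_sq_real, horth, PiLp.norm_single, Real.norm_eq_abs, sq_abs]
  ring

lemma sum_ite_eq_inner (i : ι) (k x : EuclideanSpace ℝ ι) :
    (∑ j, if j = i then 0 else k j * x j) = inner ℝ (k - single i (k i)) x := by
  rw [PiLp.inner_apply]
  refine Finset.sum_congr rfl fun j _ => ?_
  by_cases h : j = i
  · subst h; simp
  · simp [h, mul_comm]

lemma one_sub_le_apply_and_norm_sub_single_le {k : EuclideanSpace ℝ ι} {i : ι} {ε : ℝ}
    (hk : ‖k - single i 1‖ ≤ ε) : 1 - ε ≤ k i ∧ ‖k - single i (k i)‖ ≤ ε := by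
  have hsplit : k - single i 1 = single i (k i - 1) + (k - single i (k i)) := by
    ext j; by_cases h : j = i <;> simp [h]
  have hpyth : ‖k - single i 1‖ ^ 2 = (k i - 1) ^ 2 + ‖k - single i (k i)‖ ^ 2 := by
    rw [hsplit, norm_sq_single_add]
    simp
  have hε : 0 ≤ ε := (norm_nonneg _).trans hk
  constructor
  · nlinarith [norm_nonneg (k - single i 1), sq_nonneg ‖k - single i (k i)‖]
  · nlinarith [norm_nonneg (k - single i 1), norm_nonneg (k - single i (k i)), sq_nonneg (k i - 1)]

lemma carleman_conditions_weight {i : ι} {c r : ℝ} {v x : EuclideanSpace ℝ ι} (hc : 1 / 2 ≤ c)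
    (hvi : v i = 0) (hvr : ‖v‖ ≤ r) (hxi : x i ≤ -r) :
    r ≤ ‖gradient (weight i c v) x‖ ∧
      ∀ ξ, 1 / 2 * ‖gradient (weight i c v) x‖ ^ 2 ≤
        iteratedFDeriv ℝ 2 (weight i c v) x
            ![gradient (weight i c v) x, gradient (weight i c v) x] +
          iteratedFDeriv ℝ 2 (weight i c v) x ![ξ, ξ] := by
  set a := 2 * c * x i
  have hr : 0 ≤ r := (norm_nonneg v).trans hvr
  have har : a ≤ -r := by
    have hx0 : x i ≤ 0 := hxi.trans (by linarith)
    nlinarith [mul_nonpos_of_nonneg_of_nonpos (by linarith : 0 ≤ 2 * c - 1) hx0]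
  have hra : r ^ 2 ≤ a ^ 2 := by nlinarith
  have hvr2 : ‖v‖ ^ 2 ≤ r ^ 2 := pow_le_pow_left₀ (norm_nonneg v) hvr 2
  have hnorm : ‖gradient (weight i c v) x‖ ^ 2 = a ^ 2 + ‖v‖ ^ 2 := by
    rw [gradient_weight, norm_sq_single_add i a hvi]
  have hgi : (gradient (weight i c v) x) i = a := by simp [gradient_weight, hvi, a]
  refine ⟨?_, fun ξ => ?_⟩
  · exact (pow_le_pow_iff_left₀ hr (norm_nonneg _) two_ne_zero).mp (by nlinarith)
  · rw [iteratedFDeriv_two_weight, iteratedFDeriv_two_weight, hgi]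
    nlinarith [sq_nonneg (ξ i)]

end QuadLinWeight

open QuadLinWeight in
/-- Stability of the Carleman subellipticity conditions for the family of weights
`φ_k(x) = k₁ x₁² + k'·x'`: there is `ε > 0` and constants `α, β > 0` independent of
`k` such that for all `k` with `|k - e₁| ≤ ε`, `inf |∇φ_k| ≥ α` on the closure of
`B₀(2R) ∩ {x₁ < -R/4}` and the subellipticity condition holds with constant `β`. -/
theorem family_weights_subelliptic (d : ℕ) (hd : 3 ≤ d) (R : ℝ) (hR : 0 < R)
    (φ : EuclideanSpace ℝ (Fin d) → EuclideanSpace ℝ (Fin d) → ℝ)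
    (hφ : ∀ k x, φ k x = k ⟨0, by omega⟩ * (x ⟨0, by omega⟩) ^ 2 +
      ∑ i : Fin d, if i = ⟨0, by omega⟩ then 0 else k i * x i) :
    ∃ ε > (0:ℝ), ∃ α > (0:ℝ), ∃ β > (0:ℝ),
      ∀ k : EuclideanSpace ℝ (Fin d),
        ‖k - EuclideanSpace.single (⟨0, by omega⟩ : Fin d) (1:ℝ)‖ ≤ ε →
        ∀ x ∈ closure (Metric.ball (0 : EuclideanSpace ℝ (Fin d)) (2*R) ∩
            {x : EuclideanSpace ℝ (Fin d) | x ⟨0, by omega⟩ < -R/4}),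
          α ≤ ‖gradient (φ k) x‖ ∧
          ∀ ξ : EuclideanSpace ℝ (Fin d), ‖ξ‖ = ‖gradient (φ k) x‖ →
            inner ℝ (gradient (φ k) x) ξ = (0:ℝ) →
            β * ‖gradient (φ k) x‖ ^ 2 ≤
              iteratedFDeriv ℝ 2 (φ k) x ![gradient (φ k) x, gradient (φ k) x] +
                iteratedFDeriv ℝ 2 (φ k) x ![ξ, ξ] := by
  set e : Fin d := ⟨0, by omega⟩
  refine ⟨min (1 / 2) (R / 4), by positivity, R / 4, by positivity, 1 / 2, by norm_num,
    fun k hk x hx => ?_⟩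
  have hφk : φ k = weight e (k e) (k - single e (k e)) :=
    funext fun y => by rw [hφ, sum_ite_eq_inner, weight]
  obtain ⟨hke, hk'⟩ := one_sub_le_apply_and_norm_sub_single_le hk
  have hc : 1 / 2 ≤ k e := by linarith [min_le_left (1 / 2 : ℝ) (R / 4)]
  have hxe : x e ≤ -(R / 4) := by linarith [apply_le_of_mem_closure_inter hx]
  obtain ⟨hgrad, hsub⟩ :=
    carleman_conditions_weight hc (by simp) (hk'.trans (min_le_right _ _)) hxe
  rw [hφk]
  exact ⟨hgrad, fun ξ _ _ => hsub ξ⟩
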